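/- (Core of the failure-set contradiction: 2-blocked families are small.) Let J be a finite set of jobs feasible on m machines. Let S_0 ⊆ J with |I(S_0)| ≥ 1, and let S_1, …, S_k ⊆ J be pairwise disjoint sets such that for every 1 ≤ i ≤ k: I(S_0) ⊆ I(S_i), and every job j ∈ S_i satisfies |I(S_0) ∩ I(j)| ≥ 2·ℓ_j. Then k ≤ 2m. -/

import Mathlib

/-- A job given by integer release date `r`, deadline `d`, and processing time `p`. -/
structure Job where
  r : ℤ
  d : ℤ
  p : ℤ
deriving DecidableEq

/-- A job is valid if `1 ≤ p` and `r + p ≤ d`. -/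
def Job.valid (j : Job) : Prop := 1 ≤ j.p ∧ j.r + j.p ≤ j.d

/-- The interval `I(j) = {t ∈ ℤ : r ≤ t < d}` of a job. -/
noncomputable def Job.interval (j : Job) : Finset ℤ := Finset.Ico j.r j.d

/-- The laxity `ℓ_j = d - r - p` of a job. -/
def Job.lax (j : Job) : ℤ := j.d - j.r - j.p

/-- The contribution `C(j, I) = max {0, |I ∩ I(j)| - ℓ_j}` of a job to a finite set `I ⊆ ℤ`. -/
noncomputable def contribution (j : Job) (I : Finset ℤ) : ℤ :=
  max 0 (((I ∩ j.interval).card : ℤ) - j.lax)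

/-- A finite set of jobs `J` is feasible on `m` machines. -/
def Feasible (J : Finset Job) (m : ℕ) : Prop :=
  ∃ σ : ℤ → Finset Job,
    (∀ t, σ t ⊆ J) ∧
    (∀ t, (σ t).card ≤ m) ∧
    (∀ t, ∀ j ∈ σ t, j.r ≤ t ∧ t < j.d) ∧
    (∀ j ∈ J, ((Finset.Ico j.r j.d).filter (fun t => j ∈ σ t)).card = j.p.toNat)

/-- `I(S) = ⋃_{j ∈ S} I(j)` for a finite set of jobs. -/
noncomputable def intervalSet (S : Finset Job) : Finset ℤ := S.biUnion (fun j => Finset.Ico j.r j.d)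

/-!
Let `I₀ = I(S₀)` and fix a feasible schedule `σ`. A job `j` can run at most `|I(j) \ I₀|` of its
`p_j` units outside `I₀`, so it works at least `|I₀ ∩ I(j)| - ℓ_j ≥ |I₀ ∩ I(j)| / 2` units inside
`I₀`. Since the intervals of each family `S_i` cover `I₀`, every family does at least `|I₀| / 2`
units of work inside `I₀`; the families are disjoint, so together they do at least `k |I₀| / 2`,
whereas `m` machines offer only `m |I₀|` units of work on `I₀`.
-/

open Finset

def workIn (σ : ℤ → Finset Job) (I : Finset ℤ) (j : Job) : ℕ := #{t ∈ I | j ∈ σ t}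

lemma card_le_two_mul_contribution {j : Job} {I : Finset ℤ}
    (h : 2 * j.lax ≤ (#(I ∩ j.interval) : ℤ)) : (#(I ∩ j.interval) : ℤ) ≤ 2 * contribution j I := by
  unfold contribution
  omega

lemma contribution_le_workIn {σ : ℤ → Finset Job} {j : Job} (I : Finset ℤ) (hrd : j.r ≤ j.d)
    (hwindow : ∀ t, j ∈ σ t → j.r ≤ t ∧ t < j.d)
    (hproc : #{t ∈ Ico j.r j.d | j ∈ σ t} = j.p.toNat) :
    contribution j I ≤ workIn σ I j := by
  set A := {t ∈ Ico j.r j.d | j ∈ σ t}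
  have hwork : {t ∈ I | j ∈ σ t} = A ∩ I := by
    ext t
    simp only [A, mem_filter, mem_inter, mem_Ico]
    exact ⟨fun ⟨ht, hj⟩ => ⟨⟨hwindow t hj, hj⟩, ht⟩, fun ⟨⟨_, hj⟩, ht⟩ => ⟨ht, hj⟩⟩
  have hA := card_sdiff_add_card_inter A I
  have hout : #(A \ I) ≤ #(j.interval \ I) :=
    card_le_card (sdiff_subset_sdiff (filter_subset _ _) le_rfl)
  have hint := card_sdiff_add_card_inter j.interval I
  have hlen : #j.interval = (j.d - j.r).toNat := Int.card_Ico j.r j.d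
  rw [inter_comm] at hint
  unfold contribution workIn Job.lax
  rw [hwork]
  omega

lemma card_le_sum_card_inter_interval {S : Finset Job} {I : Finset ℤ} (h : I ⊆ intervalSet S) :
    #I ≤ ∑ j ∈ S, #(I ∩ j.interval) := by
  calc #I ≤ #(S.biUnion fun j => I ∩ j.interval) := by
        refine card_le_card fun t ht => ?_
        obtain ⟨j, hj, htj⟩ := mem_biUnion.mp (h ht)
        exact mem_biUnion.mpr ⟨j, hj, mem_inter.mpr ⟨ht, htj⟩⟩
    _ ≤ _ := card_biUnion_le

lemma sum_workIn_le {σ : ℤ → Finset Job} {J : Finset Job} {m : ℕ} (I : Finset ℤ)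
    (hσJ : ∀ t, σ t ⊆ J) (hσm : ∀ t, #(σ t) ≤ m) :
    ∑ j ∈ J, workIn σ I j ≤ m * #I := by
  calc ∑ j ∈ J, workIn σ I j = ∑ t ∈ I, #{j ∈ J | j ∈ σ t} :=
        sum_card_bipartiteAbove_eq_sum_card_bipartiteBelow (fun j t => j ∈ σ t)
    _ = ∑ t ∈ I, #(σ t) := by
        refine sum_congr rfl fun t _ => ?_
        rw [filter_mem_eq_inter, inter_eq_right.mpr (hσJ t)]
    _ ≤ #I * m := sum_le_card_nsmul _ _ _ fun t _ => hσm t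
    _ = m * #I := mul_comm _ _

/-- 2-blocked families are small: if `S_1, …, S_k ⊆ J` are pairwise
disjoint, each `I(S_i)` contains `I(S_0)` (which is nonempty), and every `j ∈ S_i`
satisfies `|I(S_0) ∩ I(j)| ≥ 2 ℓ_j`, then `k ≤ 2m`. -/
theorem two_blocked_families_small
    (J : Finset Job) (hJ : ∀ j ∈ J, j.valid) (m : ℕ) (hfeas : Feasible J m)
    (k : ℕ) (S : ℕ → Finset Job)
    (hsub : ∀ i ≤ k, S i ⊆ J)
    (h0 : 1 ≤ (intervalSet (S 0)).card)
    (hdisj : ∀ i, 1 ≤ i → i ≤ k → ∀ i', 1 ≤ i' → i' ≤ k → i ≠ i' → Disjoint (S i) (S i'))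
    (hcontain : ∀ i, 1 ≤ i → i ≤ k → intervalSet (S 0) ⊆ intervalSet (S i))
    (hblock : ∀ i, 1 ≤ i → i ≤ k → ∀ j ∈ S i,
      2 * j.lax ≤ ((intervalSet (S 0) ∩ j.interval).card : ℤ)) :
    k ≤ 2 * m := by
  obtain ⟨σ, hσJ, hσm, hσwindow, hσproc⟩ := hfeas
  set I₀ := intervalSet (S 0)
  have hjob : ∀ i ∈ Icc 1 k, ∀ j ∈ S i, #(I₀ ∩ j.interval) ≤ 2 * workIn σ I₀ j := by
    intro i hi j hj
    obtain ⟨hi1, hik⟩ := mem_Icc.mp hi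
    have hjJ := hsub i hik hj
    have hrd : j.r ≤ j.d := by obtain ⟨hp, hrpd⟩ := hJ j hjJ; omega
    have := card_le_two_mul_contribution (hblock i hi1 hik j hj)
    have := contribution_le_workIn I₀ hrd (hσwindow · j) (hσproc j hjJ)
    omega
  have hfamily : ∀ i ∈ Icc 1 k, #I₀ ≤ 2 * ∑ j ∈ S i, workIn σ I₀ j := fun i hi => by
    obtain ⟨hi1, hik⟩ := mem_Icc.mp hi
    rw [mul_sum]
    exact (card_le_sum_card_inter_interval (hcontain i hi1 hik)).trans
      (sum_le_sum (hjob i hi))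
  have hpairwise : (Icc 1 k : Set ℕ).PairwiseDisjoint S := fun i hi i' hi' hne => by
    simp only [coe_Icc, Set.mem_Icc] at hi hi'
    exact hdisj i hi.1 hi.2 i' hi'.1 hi'.2 hne
  have hunion : (Icc 1 k).biUnion S ⊆ J := biUnion_subset.mpr fun i hi =>
    hsub i (mem_Icc.mp hi).2
  have : k * #I₀ ≤ 2 * m * #I₀ :=
    calc k * #I₀ = #(Icc 1 k) • #I₀ := by simp
      _ ≤ ∑ i ∈ Icc 1 k, 2 * ∑ j ∈ S i, workIn σ I₀ j :=
          card_nsmul_le_sum _ _ _ hfamily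
      _ = 2 * ∑ j ∈ (Icc 1 k).biUnion S, workIn σ I₀ j := by
          rw [sum_biUnion hpairwise, mul_sum]
      _ ≤ 2 * ∑ j ∈ J, workIn σ I₀ j := Nat.mul_le_mul_left 2 (sum_le_sum_of_subset hunion)
      _ ≤ 2 * m * #I₀ := by
          rw [mul_assoc]
          exact Nat.mul_le_mul_left 2 (sum_workIn_le I₀ hσJ hσm)
  exact Nat.le_of_mul_le_mul_right this h0
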